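/- Let W : ℤ^2 × S^1 → ℂ be a weight with no zeros, and let f : ℤ^2 → ℂ be supported in B_r ∩ ℤ^2. If P_W f(γ_z) = 0 for all z ∈ ℤ^2, then f ≡ 0, where P_W f(γ) = Σ_{y ∈ γ ∩ ℤ^2} W(y, γ̂) f(y), γ_z for z ≠ 0 is the line through z perpendicular to z, and γ_0 is a fixed line through 0 with rational direction. -/

import Mathlib

/-!
Order the finitely many lattice points in the support of `f` by norm and take one, `z`, of
largest norm. Every other lattice point of `γ_z` is strictly longer than `z` (by Pythagoras for
`z ≠ 0`, trivially for `z = 0`), so `f` vanishes there, and `P_W f(γ_z) = W(z, γ̂_z) f(z)`.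
As `W` has no zeros, `f z = 0`, contradicting the choice of `z`.
-/

open RealInnerProductSpace

noncomputable def L (d : ℕ) (z : Fin d → ℤ) : EuclideanSpace ℝ (Fin d) := WithLp.toLp 2 (fun i => (z i : ℝ))

noncomputable def zstar (z : Fin 2 → ℤ) : EuclideanSpace ℝ (Fin 2) :=
  ‖L 2 z‖⁻¹ • (WithLp.toLp 2 ![-(z 1 : ℝ), (z 0 : ℝ)] : EuclideanSpace ℝ (Fin 2))

theorem eq_zero_of_forall_exists_tsum_mul_eq_zero {α β R : Type*} [Preorder β]
    [NonUnitalNonAssocSemiring R] [NoZeroDivisors R] [TopologicalSpace R]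
    (N : α → β) (f : α → R) (hf : {z | f z ≠ 0}.Finite)
    (hline : ∀ z, ∃ (s : Set α) (c : α → R), z ∈ s ∧ c z ≠ 0 ∧ (∀ y ∈ s, y ≠ z → N z < N y) ∧
      ∑' y : s, c y * f y = 0) :
    ∀ z, f z = 0 := by
  by_contra! hne
  obtain ⟨z, hfz, hmax⟩ := hf.exists_maximalFor N _ hne
  obtain ⟨s, c, hzs, hcz, hlt, hsum⟩ := hline z
  have hvanish : ∀ y : s, y ≠ ⟨z, hzs⟩ → c y * f y = 0 := by
    intro y hy
    by_contra hcf
    have hzy : N z < N y := hlt y y.2 fun h => hy (Subtype.ext h)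
    exact hzy.not_ge (hmax (right_ne_zero_of_mul hcf) hzy.le)
  rw [tsum_eq_single _ hvanish] at hsum
  exact mul_ne_zero hcz hfz hsum

lemma L_injective (d : ℕ) : Function.Injective (L d) := by
  intro a b hab
  funext i
  simpa [L] using congrFun (congrArg WithLp.ofLp hab) i

@[simp]
lemma L_zero (d : ℕ) : L d 0 = 0 := by
  ext i
  simp [L]

lemma abs_le_norm_L {d : ℕ} (z : Fin d → ℤ) (i : Fin d) : |(z i : ℝ)| ≤ ‖L d z‖ := by
  simpa [L] using PiLp.norm_apply_le (L d z) i

lemma finite_setOf_norm_L_le (d : ℕ) (r : ℝ) : {z : Fin d → ℤ | ‖L d z‖ ≤ r}.Finite := by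
  refine (Set.Finite.pi' fun _ => Set.finite_Icc (-⌈r⌉) ⌈r⌉).subset fun z hz i => ?_
  have hzi : |(z i : ℝ)| ≤ ⌈r⌉ := (abs_le_norm_L z i).trans (hz.trans (Int.le_ceil r))
  exact abs_le.mp (by exact_mod_cast hzi)

lemma inner_L_zstar (z : Fin 2 → ℤ) : ⟪L 2 z, zstar z⟫ = 0 := by
  rw [zstar, inner_smul_right, mul_eq_zero]
  right
  simp [L, PiLp.inner_apply, Fin.sum_univ_two]
  ring

lemma norm_lt_norm_add_of_inner_eq_zero {F : Type*} [NormedAddCommGroup F]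
    [InnerProductSpace ℝ F] {x v : F} (h : ⟪x, v⟫ = 0) (hv : v ≠ 0) : ‖x‖ < ‖x + v‖ := by
  have hsq : ‖x + v‖ * ‖x + v‖ = ‖x‖ * ‖x‖ + ‖v‖ * ‖v‖ :=
    norm_add_sq_eq_norm_sq_add_norm_sq_real h
  nlinarith [norm_pos_iff.mpr hv, norm_nonneg x, norm_nonneg (x + v)]

lemma norm_L_lt_of_eq_add_smul_zstar {z y : Fin 2 → ℤ} {t : ℝ}
    (hy : L 2 y = L 2 z + t • zstar z) (hne : y ≠ z) : ‖L 2 z‖ < ‖L 2 y‖ := by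
  have htv : t • zstar z ≠ 0 := by
    intro h0
    exact hne (L_injective 2 (by rw [hy, h0, add_zero]))
  rw [hy]
  exact norm_lt_norm_add_of_inner_eq_zero (by rw [inner_smul_right, inner_L_zstar, mul_zero]) htv

theorem stmt8_general (r : ℝ)
    (W : (Fin 2 → ℤ) → EuclideanSpace ℝ (Fin 2) → ℂ) (hW : ∀ y θ, W y θ ≠ 0)
    (f : (Fin 2 → ℤ) → ℂ) (hf : ∀ z, f z ≠ 0 → ‖L 2 z‖ ≤ r)
    (z0 : Fin 2 → ℤ)
    (h0 : ∑' y : {y : Fin 2 → ℤ // ∃ t : ℝ, L 2 y = t • L 2 z0},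
        W y (‖L 2 z0‖⁻¹ • L 2 z0) * f y = 0)
    (h : ∀ z : Fin 2 → ℤ, z ≠ 0 →
      ∑' y : {y : Fin 2 → ℤ // ∃ t : ℝ, L 2 y = L 2 z + t • zstar z},
        W y (zstar z) * f y = 0) :
    ∀ z, f z = 0 := by
  refine eq_zero_of_forall_exists_tsum_mul_eq_zero (fun z => ‖L 2 z‖) f
    ((finite_setOf_norm_L_le 2 r).subset hf) fun z => ?_
  by_cases hz : z = 0
  · subst hz
    refine ⟨{y | ∃ t : ℝ, L 2 y = t • L 2 z0}, fun y => W y (‖L 2 z0‖⁻¹ • L 2 z0),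
      ⟨0, by simp⟩, hW _ _, fun y _ hy => ?_, h0⟩
    simpa using (L_injective 2).ne hy
  · exact ⟨{y | ∃ t : ℝ, L 2 y = L 2 z + t • zstar z}, fun y => W y (zstar z),
      ⟨0, by simp⟩, hW _ _, fun y ⟨_, hy⟩ hne => norm_L_lt_of_eq_add_smul_zstar hy hne, h z hz⟩

theorem stmt8 (r : ℝ) (hr : 0 < r)
    (W : (Fin 2 → ℤ) → EuclideanSpace ℝ (Fin 2) → ℂ) (hW : ∀ y θ, W y θ ≠ 0)
    (f : (Fin 2 → ℤ) → ℂ) (hf : ∀ z, f z ≠ 0 → ‖L 2 z‖ ≤ r)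
    (z0 : Fin 2 → ℤ) (hz0 : z0 ≠ 0)
    (h0 : ∑' y : {y : Fin 2 → ℤ // ∃ t : ℝ, L 2 y = t • L 2 z0},
        W y (‖L 2 z0‖⁻¹ • L 2 z0) * f y = 0)
    (h : ∀ z : Fin 2 → ℤ, z ≠ 0 →
      ∑' y : {y : Fin 2 → ℤ // ∃ t : ℝ, L 2 y = L 2 z + t • zstar z},
        W y (zstar z) * f y = 0) :
    ∀ z, f z = 0 :=
  stmt8_general r W hW f hf z0 h0 h
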